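/- Let γ > 0 and 0 < λ₁ ≤ λ ≤ γ². There exist constants M(γ, λ₁) > 0 and ρ(γ, λ₁) > 0, depending only on γ and λ₁, such that the solution (u, v) of u' = v, v' = -λ u - 2γ v satisfies |u(t)|² + λ⁻¹ |v(t)|² ≤ M(γ, λ₁)² e^{-2ρ(γ, λ₁) t} ( |u(0)|² + λ⁻¹ |v(0)|² ) for all t ≥ 0. -/

import Mathlib

/-!
The energy `E = u² + v²/λ` alone only dissipates through `v`, so one adds the cross term `uv/γ`:
for `λ ≤ γ²` the resulting Lyapunov function `V` is comparable to the energy (`E ≤ 2V ≤ 3E`),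
and along solutions `V' ≤ -(2δ/3) V` as soon as `2γδ ≤ λ` and `2δ ≤ γ`.
Taking `δ = min (λ₁/(2γ)) (γ/2)` makes this work for all `λ₁ ≤ λ ≤ γ²` at once,
and Grönwall's inequality turns it into exponential decay.
-/

open Real Set

theorem le_mul_exp_of_hasDerivWithinAt_le_mul {f f' : ℝ → ℝ} {K a t : ℝ}
    (hf : ∀ x ∈ Ici a, HasDerivWithinAt f (f' x) (Ici a) x)
    (bound : ∀ x ∈ Ici a, f' x ≤ K * f x) (ht : a ≤ t) :
    f t ≤ f a * exp (K * (t - a)) := by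
  have hright : ∀ x ∈ Ico a t, HasDerivWithinAt f (f' x) (Ici x) x := fun x hx =>
    (hf x hx.1).mono (Ici_subset_Ici.2 hx.1)
  have hcont : ContinuousOn f (Icc a t) := fun x hx =>
    (hf x hx.1).continuousWithinAt.mono Icc_subset_Ici_self
  have := le_gronwallBound_of_liminf_deriv_right_le (ε := 0) hcont
    (fun x hx _ hr => (hright x hx).liminf_right_slope_le hr) le_rfl
    (fun x hx => by simpa using bound x hx.1) t ⟨ht, le_rfl⟩
  rwa [gronwallBound_ε0] at this

noncomputable def lyapunov (γ lam a b : ℝ) : ℝ := a ^ 2 + lam⁻¹ * b ^ 2 + γ⁻¹ * (a * b)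

theorem HasDerivWithinAt.lyapunov {u v : ℝ → ℝ} {u' v' t : ℝ} {s : Set ℝ}
    (hu : HasDerivWithinAt u u' s t) (hv : HasDerivWithinAt v v' s t) (γ lam : ℝ) :
    HasDerivWithinAt (fun x => lyapunov γ lam (u x) (v x))
      (2 * u t * u' + lam⁻¹ * (2 * v t * v') + γ⁻¹ * (u' * v t + u t * v')) s t :=
  (((hu.pow 2).add ((hv.pow 2).const_mul lam⁻¹)).add ((hu.mul hv).const_mul γ⁻¹)).congr_deriv
    (by norm_num)

section

variable {γ lam δ : ℝ}

theorem energy_le_two_mul_lyapunov (hγ : 0 < γ) (hlam : 0 < lam) (hle : lam ≤ γ ^ 2) (a b : ℝ) :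
    a ^ 2 + lam⁻¹ * b ^ 2 ≤ 2 * lyapunov γ lam a b := by
  have key : 0 ≤ lam * γ * a ^ 2 + γ * b ^ 2 + 2 * lam * a * b := by
    nlinarith [sq_nonneg (lam * a + γ * b), mul_nonneg (sq_nonneg a) (sub_nonneg.2 hle),
      mul_nonneg hlam.le (sq_nonneg a)]
  rw [lyapunov, ← sub_nonneg]
  have e : 2 * (a ^ 2 + lam⁻¹ * b ^ 2 + γ⁻¹ * (a * b)) - (a ^ 2 + lam⁻¹ * b ^ 2)
      = (lam * γ * a ^ 2 + γ * b ^ 2 + 2 * lam * a * b) / (lam * γ) := by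
    field_simp; ring
  rw [e]; positivity

theorem lyapunov_le_three_halves_mul_energy (hγ : 0 < γ) (hlam : 0 < lam) (hle : lam ≤ γ ^ 2)
    (a b : ℝ) :
    lyapunov γ lam a b ≤ 3 / 2 * (a ^ 2 + lam⁻¹ * b ^ 2) := by
  have key : 0 ≤ lam * γ * a ^ 2 + γ * b ^ 2 - 2 * lam * a * b := by
    nlinarith [sq_nonneg (lam * a - γ * b), mul_nonneg (sq_nonneg a) (sub_nonneg.2 hle),
      mul_nonneg hlam.le (sq_nonneg a)]
  rw [lyapunov, ← sub_nonneg]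
  have e : 3 / 2 * (a ^ 2 + lam⁻¹ * b ^ 2) - (a ^ 2 + lam⁻¹ * b ^ 2 + γ⁻¹ * (a * b))
      = (lam * γ * a ^ 2 + γ * b ^ 2 - 2 * lam * a * b) / (2 * (lam * γ)) := by
    field_simp; ring
  rw [e]; positivity

theorem lyapunov_flow_le (hγ : 0 < γ) (hlam : 0 < lam) (hle : lam ≤ γ ^ 2)
    (hδ₀ : 0 ≤ δ) (hδlam : 2 * γ * δ ≤ lam) (hδγ : 2 * δ ≤ γ) (a b : ℝ) :
    2 * a * b + lam⁻¹ * (2 * b * (-lam * a - 2 * γ * b))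
        + γ⁻¹ * (b * b + a * (-lam * a - 2 * γ * b))
      ≤ -(2 * δ / 3) * lyapunov γ lam a b := by
  have key : 0 ≤ 2 * lam * γ * a * b + 4 * γ ^ 2 * b ^ 2 - lam * b ^ 2 + lam ^ 2 * a ^ 2
      - 2 * δ / 3 * (lam * γ * a ^ 2 + γ * b ^ 2 + lam * a * b) := by
    nlinarith [mul_nonneg hγ.le (sq_nonneg (lam * a + 2 * γ * b)),
      mul_nonneg hδ₀ (sq_nonneg (lam * a - 2 * γ * b)),
      mul_nonneg (mul_nonneg (mul_pos hγ hlam).le (sq_nonneg a)) (sub_nonneg.2 hδlam),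
      mul_nonneg (sq_nonneg (lam * a)) (by linarith : (0:ℝ) ≤ γ - δ),
      mul_nonneg (mul_nonneg hγ.le (sq_nonneg b)) (sub_nonneg.2 hle),
      mul_nonneg (sq_nonneg (γ * b)) (by linarith : (0:ℝ) ≤ 3 * γ - 4 * δ)]
  rw [lyapunov, ← sub_nonneg]
  have e : -(2 * δ / 3) * (a ^ 2 + lam⁻¹ * b ^ 2 + γ⁻¹ * (a * b))
      - (2 * a * b + lam⁻¹ * (2 * b * (-lam * a - 2 * γ * b))
        + γ⁻¹ * (b * b + a * (-lam * a - 2 * γ * b)))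
      = (2 * lam * γ * a * b + 4 * γ ^ 2 * b ^ 2 - lam * b ^ 2 + lam ^ 2 * a ^ 2
        - 2 * δ / 3 * (lam * γ * a ^ 2 + γ * b ^ 2 + lam * a * b)) / (lam * γ) := by
    field_simp; ring
  rw [e]; positivity

theorem lyapunov_decay (hγ : 0 < γ) (hlam : 0 < lam) (hle : lam ≤ γ ^ 2)
    (hδ₀ : 0 ≤ δ) (hδlam : 2 * γ * δ ≤ lam) (hδγ : 2 * δ ≤ γ) {u v : ℝ → ℝ}
    (hu : ∀ t ∈ Ici (0:ℝ), HasDerivWithinAt u (v t) (Ici 0) t)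
    (hv : ∀ t ∈ Ici (0:ℝ), HasDerivWithinAt v (-lam * u t - 2 * γ * v t) (Ici 0) t)
    {t : ℝ} (ht : 0 ≤ t) :
    lyapunov γ lam (u t) (v t) ≤ lyapunov γ lam (u 0) (v 0) * exp (-(2 * δ / 3) * t) := by
  simpa using le_mul_exp_of_hasDerivWithinAt_le_mul
    (fun x hx => (hu x hx).lyapunov (hv x hx) γ lam)
    (fun x _ => lyapunov_flow_le hγ hlam hle hδ₀ hδlam hδγ (u x) (v x)) ht

theorem energy_decay (hγ : 0 < γ) (hlam : 0 < lam) (hle : lam ≤ γ ^ 2)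
    (hδ₀ : 0 ≤ δ) (hδlam : 2 * γ * δ ≤ lam) (hδγ : 2 * δ ≤ γ) {u v : ℝ → ℝ}
    (hu : ∀ t ∈ Ici (0:ℝ), HasDerivWithinAt u (v t) (Ici 0) t)
    (hv : ∀ t ∈ Ici (0:ℝ), HasDerivWithinAt v (-lam * u t - 2 * γ * v t) (Ici 0) t)
    {t : ℝ} (ht : 0 ≤ t) :
    u t ^ 2 + lam⁻¹ * v t ^ 2 ≤ 3 * exp (-(2 * δ / 3) * t) * (u 0 ^ 2 + lam⁻¹ * v 0 ^ 2) :=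
  calc u t ^ 2 + lam⁻¹ * v t ^ 2
      ≤ 2 * lyapunov γ lam (u t) (v t) := energy_le_two_mul_lyapunov hγ hlam hle _ _
    _ ≤ 2 * (lyapunov γ lam (u 0) (v 0) * exp (-(2 * δ / 3) * t)) := by
      gcongr; exact lyapunov_decay hγ hlam hle hδ₀ hδlam hδγ hu hv ht
    _ ≤ 2 * (3 / 2 * (u 0 ^ 2 + lam⁻¹ * v 0 ^ 2) * exp (-(2 * δ / 3) * t)) := by
      gcongr; exact lyapunov_le_three_halves_mul_energy hγ hlam hle _ _
    _ = 3 * exp (-(2 * δ / 3) * t) * (u 0 ^ 2 + lam⁻¹ * v 0 ^ 2) := by ring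

end

/-- Uniform exponential decay of the weighted energy over `λ₁ ≤ λ ≤ γ²`. -/
theorem stmt_8 (γ lam₁ : ℝ) (hγ : 0 < γ) (hlam₁ : 0 < lam₁) :
    ∃ M > (0:ℝ), ∃ ρ > (0:ℝ),
      ∀ lam : ℝ, lam₁ ≤ lam → lam ≤ γ ^ 2 →
      ∀ u v : ℝ → ℝ,
        (∀ t ∈ Set.Ici (0:ℝ), HasDerivWithinAt u (v t) (Set.Ici 0) t) →
        (∀ t ∈ Set.Ici (0:ℝ),
          HasDerivWithinAt v (-lam * u t - 2 * γ * v t) (Set.Ici 0) t) →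
        ∀ t ≥ (0:ℝ),
          (u t) ^ 2 + lam⁻¹ * (v t) ^ 2
            ≤ M ^ 2 * Real.exp (-2 * ρ * t) * ((u 0) ^ 2 + lam⁻¹ * (v 0) ^ 2) := by
  set δ := min (lam₁ / (2 * γ)) (γ / 2)
  have hδ₀ : 0 < δ := lt_min (by positivity) (by positivity)
  refine ⟨2, two_pos, δ / 3, by positivity, fun lam hlam₁lam hle u v hu hv t ht => ?_⟩
  have hlam : 0 < lam := hlam₁.trans_le hlam₁lam
  have hδlam : 2 * γ * δ ≤ lam := calc
    2 * γ * δ ≤ 2 * γ * (lam₁ / (2 * γ)) := by gcongr; exact min_le_left _ _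
    _ = lam₁ := by field_simp
    _ ≤ lam := hlam₁lam
  have hδγ : 2 * δ ≤ γ := by linarith [min_le_right (lam₁ / (2 * γ)) (γ / 2)]
  calc u t ^ 2 + lam⁻¹ * v t ^ 2
      ≤ 3 * exp (-(2 * δ / 3) * t) * (u 0 ^ 2 + lam⁻¹ * v 0 ^ 2) :=
        energy_decay hγ hlam hle hδ₀.le hδlam hδγ hu hv ht
    _ ≤ 2 ^ 2 * exp (-2 * (δ / 3) * t) * (u 0 ^ 2 + lam⁻¹ * v 0 ^ 2) := by
      rw [show -2 * (δ / 3) * t = -(2 * δ / 3) * t by ring]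
      gcongr
      norm_num
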